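/- arXiv:1907.06983 — 6 statements merged into one kernel-verified Lean document; each statement's English description precedes it below -/
import Mathlib

section
/- There exists a constant C > 0 such that for every integer k ≥ 1, every n ≥ 2, every finite metric space (X, d) with |X| = n, and every priority ordering x : Fin n → X (a bijection; x j has priority (j : ℕ) + 1), there exist a natural number m with (m : ℝ) ≤ C · k · n^{1/k} · Real.log n and a map f : X → (Fin m → ℝ) such that: (i) f is non-expanding, i.e. ‖f u − f w‖∞ ≤ d(u, w) for all u, w ∈ X; and (ii) for every j : Fin n and every y ∈ X, ‖f (x j) − f y‖∞ ≥ d(x j, y) / (2 · max 1 ⌈(k · Real.log ((j : ℝ) + 1)) / Real.log n⌉ − 1). In particular the embedding has prioritized distortion 2⌈k·log j / log n⌉ − 1 and dimension O(k · n^{1/k} · log n); substituting priority n recovers distortion 2k − 1. -/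
open Finset

noncomputable def mdist {X : Type} [MetricSpace X] (u : X) (S : Finset X) : ℝ :=
  if h : S.Nonempty then S.inf' h (fun z => dist u z) else 0

lemma mdist_le {X : Type} [MetricSpace X] (u : X) {S : Finset X} {z : X} (hz : z ∈ S) :
    mdist u S ≤ dist u z := by
  have h : S.Nonempty := ⟨z, hz⟩
  rw [mdist, dif_pos h]
  exact Finset.inf'_le _ hz

lemma le_mdist {X : Type} [MetricSpace X] {u : X} {S : Finset X} (h : S.Nonempty) {r : ℝ}
    (hr : ∀ z ∈ S, r ≤ dist u z) : r ≤ mdist u S := by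
  rw [mdist, dif_pos h]
  exact Finset.le_inf' h _ hr

lemma mdist_nonneg {X : Type} [MetricSpace X] (u : X) (S : Finset X) : 0 ≤ mdist u S := by
  by_cases h : S.Nonempty
  · exact le_mdist h (fun z _ => dist_nonneg)
  · rw [mdist, dif_neg h]

lemma abs_mdist_sub_le {X : Type} [MetricSpace X] (u w : X) (S : Finset X) :
    |mdist u S - mdist w S| ≤ dist u w := by
  by_cases h : S.Nonempty
  · have key : ∀ a b : X, mdist a S ≤ mdist b S + dist a b := by
      intro a b
      obtain ⟨z, hz, hez⟩ := Finset.exists_mem_eq_inf' h (fun z => dist b z)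
      have : mdist a S ≤ dist a z := mdist_le a hz
      have h2 : mdist b S = dist b z := by rw [mdist, dif_pos h]; exact hez
      calc mdist a S ≤ dist a z := this
        _ ≤ dist a b + dist b z := dist_triangle a b z
        _ = mdist b S + dist a b := by rw [h2]; ring
    rw [abs_sub_le_iff]
    constructor
    · have := key u w; linarith
    · have := key w u; rw [dist_comm] at this; linarith
  · rw [mdist, dif_neg h, mdist, dif_neg h]
    simpa using dist_nonneg

section Prob
variable {α : Type} [Fintype α] [DecidableEq α]

noncomputable def wgt (π : α → ℝ) (S : Finset α) : ℝ :=
  (∏ z ∈ S, π z) * ∏ z ∈ Sᶜ, (1 - π z)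

lemma wgt_nonneg {π : α → ℝ} (h0 : ∀ z, 0 ≤ π z) (h1 : ∀ z, π z ≤ 1) (S : Finset α) :
    0 ≤ wgt π S := by
  apply mul_nonneg
  · exact Finset.prod_nonneg (fun z _ => h0 z)
  · exact Finset.prod_nonneg (fun z _ => by linarith [h1 z])

lemma sum_wgt_powerset_compl (π : α → ℝ) (T : Finset α) :
    ∑ S ∈ Tᶜ.powerset, wgt π S = ∏ z ∈ T, (1 - π z) := by
  have key : ∀ S ∈ Tᶜ.powerset,
      wgt π S = (∏ z ∈ T, (1 - π z)) * ((∏ z ∈ S, π z) * ∏ z ∈ Tᶜ \ S, (1 - π z)) := by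
    intro S hS
    rw [Finset.mem_powerset] at hS
    have hset : Sᶜ = T ∪ (Tᶜ \ S) := by
      ext z
      simp only [Finset.mem_compl, Finset.mem_union, Finset.mem_sdiff]
      constructor
      · intro hz
        by_cases hT : z ∈ T
        · exact Or.inl hT
        · exact Or.inr ⟨by simpa using hT, hz⟩
      · rintro (hT | ⟨_, hz⟩)
        · intro hzS
          have := hS hzS
          simp only [Finset.mem_compl] at this
          exact this hT
        · exact hz
    have hdisj : Disjoint T (Tᶜ \ S) :=
      Finset.disjoint_left.mpr (fun z hz hz2 => by
        rw [Finset.mem_sdiff, Finset.mem_compl] at hz2; exact hz2.1 hz)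
    rw [wgt, hset, Finset.prod_union hdisj]
    ring
  rw [Finset.sum_congr rfl key, ← Finset.mul_sum, ← Finset.prod_add]
  simp

lemma sum_wgt_total (π : α → ℝ) : ∑ S : Finset α, wgt π S = 1 := by
  have := sum_wgt_powerset_compl π (∅ : Finset α)
  simpa using this

/-- the set of subsets covering requirement (A, O) : hit A, miss O -/
def coverSets (A O : Finset α) : Finset (Finset α) :=
  Oᶜ.powerset \ (A ∪ O)ᶜ.powerset

lemma mem_coverSets {A O S : Finset α} :
    S ∈ coverSets A O ↔ ((A ∩ S).Nonempty ∧ (O ∩ S) = ∅) := by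
  have h1 : ∀ B : Finset α, S ⊆ Bᶜ ↔ B ∩ S = ∅ := by
    intro B
    constructor
    · intro h
      ext z
      simp only [Finset.mem_inter, Finset.notMem_empty, iff_false]
      rintro ⟨hzB, hzS⟩
      have := h hzS
      rw [Finset.mem_compl] at this
      exact this hzB
    · intro h z hz
      rw [Finset.mem_compl]
      intro hzB
      have : z ∈ B ∩ S := Finset.mem_inter.mpr ⟨hzB, hz⟩
      rw [h] at this
      exact absurd this (Finset.notMem_empty z)
  rw [coverSets, Finset.mem_sdiff, Finset.mem_powerset, Finset.mem_powerset, h1, h1,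
    Finset.union_inter_distrib_right]
  rw [Finset.union_eq_empty]
  rw [Finset.nonempty_iff_ne_empty]
  tauto

lemma sum_wgt_cover (π : α → ℝ) (A O : Finset α) (hAO : Disjoint A O) :
    ∑ S ∈ coverSets A O, wgt π S
      = (∏ z ∈ O, (1 - π z)) * (1 - ∏ z ∈ A, (1 - π z)) := by
  have hsub : (A ∪ O)ᶜ.powerset ⊆ Oᶜ.powerset :=
    Finset.powerset_mono.mpr (Finset.compl_subset_compl.mpr Finset.subset_union_right)
  rw [coverSets, Finset.sum_sdiff_eq_sub hsub, sum_wgt_powerset_compl, sum_wgt_powerset_compl,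
    Finset.prod_union hAO]
  ring

lemma prod_one_sub_ge (s : Finset α) (a : α → ℝ) (h0 : ∀ z ∈ s, 0 ≤ a z)
    (h1 : ∀ z ∈ s, a z ≤ 1) : 1 - ∑ z ∈ s, a z ≤ ∏ z ∈ s, (1 - a z) := by
  classical
  induction s using Finset.cons_induction with
  | empty => simp
  | cons z s hz ih =>
    rw [Finset.prod_cons, Finset.sum_cons]
    have h0' : ∀ w ∈ s, 0 ≤ a w := fun w hw => h0 w (Finset.mem_cons_of_mem hw)
    have h1' : ∀ w ∈ s, a w ≤ 1 := fun w hw => h1 w (Finset.mem_cons_of_mem hw)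
    have ihs := ih h0' h1'
    have hz0 : 0 ≤ a z := h0 z (Finset.mem_cons_self _ _)
    have hz1 : a z ≤ 1 := h1 z (Finset.mem_cons_self _ _)
    have hs0 : 0 ≤ ∑ w ∈ s, a w := Finset.sum_nonneg h0'
    nlinarith [ihs]

lemma prod_one_sub_le_exp (s : Finset α) (a : α → ℝ) (h0 : ∀ z ∈ s, 0 ≤ a z)
    (h1 : ∀ z ∈ s, a z ≤ 1) :
    ∏ z ∈ s, (1 - a z) ≤ Real.exp (-∑ z ∈ s, a z) := by
  rw [← Finset.sum_neg_distrib, Real.exp_sum]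
  apply Finset.prod_le_prod
  · intro z hz; linarith [h1 z hz]
  · intro z hz
    have := Real.add_one_le_exp (-a z)
    linarith

lemma cover_prob_ge (π : α → ℝ) (h0 : ∀ z, 0 ≤ π z) (h2 : ∀ z, π z ≤ 1/2)
    (A O : Finset α) (hAO : Disjoint A O) (ε : ℝ) (hε0 : 0 < ε) (hε1 : ε ≤ 1)
    (hhit : ε ≤ ∑ z ∈ A, π z) (hmiss : ∑ z ∈ O, π z ≤ 1/2) :
    ε/4 ≤ ∑ S ∈ coverSets A O, wgt π S := by
  rw [sum_wgt_cover π A O hAO]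
  have hOlow : (1:ℝ)/2 ≤ ∏ z ∈ O, (1 - π z) := by
    have := prod_one_sub_ge O π (fun z _ => h0 z) (fun z _ => by linarith [h2 z])
    linarith
  have hAup : ∏ z ∈ A, (1 - π z) ≤ Real.exp (-ε) := by
    calc ∏ z ∈ A, (1 - π z)
        ≤ Real.exp (-∑ z ∈ A, π z) :=
          prod_one_sub_le_exp A π (fun z _ => h0 z) (fun z _ => by linarith [h2 z])
      _ ≤ Real.exp (-ε) := Real.exp_le_exp.mpr (by linarith)
  have hexp : Real.exp (-ε) ≤ 1 - ε/2 := by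
    have h := Real.add_one_le_exp ε
    have hepos : (0:ℝ) < Real.exp ε := Real.exp_pos ε
    rw [Real.exp_neg]
    rw [inv_le_iff_one_le_mul₀ hepos]  -- may need different name
    nlinarith
  have h1 : ε/2 ≤ 1 - ∏ z ∈ A, (1 - π z) := by linarith
  have h2' : (0:ℝ) ≤ 1 - ∏ z ∈ A, (1 - π z) := by linarith
  calc ε/4 = (1/2) * (ε/2) := by ring
    _ ≤ (∏ z ∈ O, (1 - π z)) * (1 - ∏ z ∈ A, (1 - π z)) := by
        apply mul_le_mul hOlow h1 (by linarith) (by linarith)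

end Prob

section Greedy
variable {α : Type} [Fintype α] [DecidableEq α] {Q : Type} [DecidableEq Q]

lemma exists_good_set (π : α → ℝ) (h0 : ∀ z, 0 ≤ π z) (h1 : ∀ z, π z ≤ 1)
    (A O : Q → Finset α) (p : ℝ) (N : Finset Q)
    (hprob : ∀ q ∈ N, p ≤ ∑ S ∈ coverSets (A q) (O q), wgt π S) :
    ∃ S₀ : Finset α,
      p * N.card ≤ ((N.filter (fun q => S₀ ∈ coverSets (A q) (O q))).card : ℝ) := by
  classical
  have swap : ∑ S : Finset α, wgt π S *
        ((N.filter (fun q => S ∈ coverSets (A q) (O q))).card : ℝ)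
      = ∑ q ∈ N, ∑ S ∈ coverSets (A q) (O q), wgt π S := by
    have step1 : ∀ S : Finset α,
        wgt π S * ((N.filter (fun q => S ∈ coverSets (A q) (O q))).card : ℝ)
          = ∑ q ∈ N, (if S ∈ coverSets (A q) (O q) then wgt π S else 0) := by
      intro S
      rw [Finset.card_filter]
      push_cast
      rw [Finset.mul_sum]
      congr 1
      funext q
      by_cases h : S ∈ coverSets (A q) (O q) <;> simp [h]
    rw [Finset.sum_congr rfl (fun S _ => step1 S), Finset.sum_comm]
    apply Finset.sum_congr rfl
    intro q _
    rw [← Finset.sum_filter]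
    congr 1
    ext S
    simp
  have lower : p * N.card ≤ ∑ S : Finset α, wgt π S *
      ((N.filter (fun q => S ∈ coverSets (A q) (O q))).card : ℝ) := by
    rw [swap]
    calc p * N.card = ∑ _q ∈ N, p := by rw [Finset.sum_const]; ring
      _ ≤ _ := Finset.sum_le_sum (fun q hq => hprob q hq)
  obtain ⟨S₀, _, hmax⟩ := Finset.exists_max_image (Finset.univ : Finset (Finset α))
    (fun S => (N.filter (fun q => S ∈ coverSets (A q) (O q))).card) ⟨∅, Finset.mem_univ _⟩
  refine ⟨S₀, le_trans lower ?_⟩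
  calc ∑ S : Finset α, wgt π S * ((N.filter (fun q => S ∈ coverSets (A q) (O q))).card : ℝ)
      ≤ ∑ S : Finset α, wgt π S *
          ((N.filter (fun q => S₀ ∈ coverSets (A q) (O q))).card : ℝ) := by
        apply Finset.sum_le_sum
        intro S _
        apply mul_le_mul_of_nonneg_left _ (wgt_nonneg h0 h1 S)
        exact_mod_cast hmax S (Finset.mem_univ S)
    _ = ((N.filter (fun q => S₀ ∈ coverSets (A q) (O q))).card : ℝ) := by
        rw [← Finset.sum_mul, sum_wgt_total, one_mul]

lemma greedy_cover (π : α → ℝ) (h0 : ∀ z, 0 ≤ π z) (h1 : ∀ z, π z ≤ 1)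
    (A O : Q → Finset α) (p : ℝ) (hp0 : 0 < p) (hp1 : p < 1) :
    ∀ (M : ℕ) (N : Finset Q), (∀ q ∈ N, p ≤ ∑ S ∈ coverSets (A q) (O q), wgt π S) →
      (N.card : ℝ) * (1-p)^M < 1 →
      ∃ g : ℕ → Finset α, ∀ q ∈ N, ∃ c < M, g c ∈ coverSets (A q) (O q) := by
  classical
  intro M
  induction M with
  | zero =>
    intro N _ hN
    simp only [pow_zero, mul_one] at hN
    have : N.card = 0 := by exact_mod_cast Nat.lt_one_iff.mp (by exact_mod_cast hN)
    rw [Finset.card_eq_zero] at this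
    subst this
    exact ⟨fun _ => ∅, fun q hq => absurd hq (Finset.notMem_empty q)⟩
  | succ M ih =>
    intro N hprob hN
    obtain ⟨S₀, hS₀⟩ := exists_good_set π h0 h1 A O p N hprob
    set N' := N.filter (fun q => ¬ (S₀ ∈ coverSets (A q) (O q))) with hN'def
    have hcard : (N'.card : ℝ) ≤ (1 - p) * N.card := by
      have hsplit := Finset.card_filter_add_card_filter_not
        (s := N) (p := fun q => S₀ ∈ coverSets (A q) (O q))
      have : (N'.card : ℕ) + (N.filter (fun q => S₀ ∈ coverSets (A q) (O q))).card = N.card := by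
        rw [hN'def]
        omega
      have hc : (N'.card : ℝ)
          = (N.card : ℝ) - ((N.filter (fun q => S₀ ∈ coverSets (A q) (O q))).card : ℝ) := by
        have := this
        push_cast [← this]
        ring
      rw [hc]
      linarith
    have hN'small : (N'.card : ℝ) * (1-p)^M < 1 := by
      have h1p : (0:ℝ) ≤ 1 - p := by linarith
      have hpow : (0:ℝ) ≤ (1-p)^M := pow_nonneg h1p M
      calc (N'.card : ℝ) * (1-p)^M ≤ ((1-p) * N.card) * (1-p)^M :=
            mul_le_mul_of_nonneg_right hcard hpow
        _ = (N.card : ℝ) * (1-p)^(M+1) := by ring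
        _ < 1 := hN
    obtain ⟨g', hg'⟩ := ih N' (fun q hq => hprob q (Finset.mem_filter.mp hq).1) hN'small
    refine ⟨fun c => if c = 0 then S₀ else g' (c - 1), fun q hq => ?_⟩
    by_cases hcov : S₀ ∈ coverSets (A q) (O q)
    · exact ⟨0, Nat.succ_pos M, by simpa using hcov⟩
    · have hqN' : q ∈ N' := Finset.mem_filter.mpr ⟨hq, hcov⟩
      obtain ⟨c, hc, hgc⟩ := hg' q hqN'
      exact ⟨c + 1, by omega, by simpa using hgc⟩

end Greedy

section Chain
variable {X : Type} [MetricSpace X] [Fintype X] [DecidableEq X]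

lemma chain_lemma (π : ℕ → X → ℝ) (ρ : ℝ) (hρ : 2 ≤ ρ)
    (hnn : ∀ s z, 0 ≤ π s z)
    (hmono : ∀ s z, π (s+1) z ≤ ρ * π s z)
    (u y : X) (t : ℕ) (ht : 1 ≤ t) (Δ : ℝ) (hΔ : 0 < Δ)
    (hd : dist u y = (2*(t:ℝ)-1) * Δ)
    (hstart : 1/(4*ρ) ≤ π (t-1) u)
    (htotal : ∑ z : X, π 0 z ≤ 1/2) :
    ∃ s < t, ∃ A O : Finset X, Disjoint A O ∧
      (1/(4*ρ) ≤ ∑ z ∈ A, π s z) ∧ (∑ z ∈ O, π s z ≤ 1/2) ∧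
      ∀ S : Finset X, (A ∩ S).Nonempty → (O ∩ S) = ∅ →
        Δ ≤ |mdist u S - mdist y S| := by
  classical
  have hρ0 : (0:ℝ) < ρ := by linarith
  set c : ℕ → X := fun i => if i % 2 = 0 then u else y with hc
  set B : ℕ → Finset X :=
    fun i => Finset.univ.filter (fun z => dist (c i) z ≤ (i:ℝ) * Δ) with hB
  set Ob : ℕ → Finset X :=
    fun i => Finset.univ.filter (fun z => dist (c i) z < (i:ℝ) * Δ) with hOb
  set Stop : ℕ → Prop := fun i => ∑ z ∈ Ob (i+1), π (t-1-i) z ≤ 1/2 with hStop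
  have hcc : ∀ i, dist (c i) (c (i+1)) = dist u y := by
    intro i
    by_cases h : i % 2 = 0
    · have h1 : (i+1) % 2 ≠ 0 := by omega
      simp [hc, h, h1]
    · have h1 : (i+1) % 2 = 0 := by omega
      simp [hc, h, h1, dist_comm]
  have hstop_last : Stop (t-1) := by
    have hsub : Ob (t-1+1) ⊆ Finset.univ := Finset.subset_univ _
    have : ∑ z ∈ Ob (t-1+1), π (t-1-(t-1)) z ≤ ∑ z : X, π (t-1-(t-1)) z :=
      Finset.sum_le_sum_of_subset_of_nonneg hsub (fun z _ _ => hnn _ z)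
    have ht0 : t-1-(t-1) = 0 := by omega
    show ∑ z ∈ Ob (t-1+1), π (t-1-(t-1)) z ≤ 1/2
    rw [ht0] at this ⊢
    linarith
  have hex : ∃ i, Stop i := ⟨t-1, hstop_last⟩
  set i₀ := Nat.find hex with hi₀
  have hstop : Stop i₀ := Nat.find_spec hex
  have hleast : ∀ l < i₀, ¬ Stop l := fun l hl => Nat.find_min hex hl
  have hi₀le : i₀ ≤ t-1 := Nat.find_min' hex hstop_last
  -- invariant: hit mass at B i₀
  have hinv : ∀ i, i ≤ t-1 → (∀ l < i, ¬ Stop l) →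
      1/(4*ρ) ≤ ∑ z ∈ B i, π (t-1-i) z := by
    intro i
    induction i with
    | zero =>
      intro _ _
      have humem : u ∈ B 0 := by
        simp [hB, hc]
      calc 1/(4*ρ) ≤ π (t-1) u := hstart
        _ ≤ ∑ z ∈ B 0, π (t-1-0) z := by
            have : t-1-0 = t-1 := by omega
            rw [this]
            exact Finset.single_le_sum (fun z _ => hnn _ z) humem
    | succ i _ =>
      intro hle hns
      have hnsi : ¬ Stop i := hns i (Nat.lt_succ_self i)
      have hgt : 1/2 < ∑ z ∈ Ob (i+1), π (t-1-i) z := by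
        have hnsi' : ¬ (∑ z ∈ Ob (i+1), π (t-1-i) z ≤ 1/2) := hnsi
        push_neg at hnsi'
        exact hnsi'
      have hidx : t-1-(i+1)+1 = t-1-i := by omega
      have hlev : ∑ z ∈ Ob (i+1), π (t-1-i) z ≤ ρ * ∑ z ∈ Ob (i+1), π (t-1-(i+1)) z := by
        rw [Finset.mul_sum]
        apply Finset.sum_le_sum
        intro z _
        have := hmono (t-1-(i+1)) z
        rw [hidx] at this
        exact this
      have hsub : Ob (i+1) ⊆ B (i+1) := by
        intro z hz
        simp only [hOb, hB, Finset.mem_filter, Finset.mem_univ, true_and] at hz ⊢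
        exact le_of_lt hz
      have hmon : ∑ z ∈ Ob (i+1), π (t-1-(i+1)) z ≤ ∑ z ∈ B (i+1), π (t-1-(i+1)) z :=
        Finset.sum_le_sum_of_subset_of_nonneg hsub (fun z _ _ => hnn _ z)
      have h2ρ : 1/(2*ρ) < ∑ z ∈ Ob (i+1), π (t-1-(i+1)) z := by
        have h := lt_of_lt_of_le hgt hlev
        rw [div_lt_iff₀ (by linarith : (0:ℝ) < 2*ρ)]
        nlinarith
      have : 1/(4*ρ) ≤ 1/(2*ρ) := by
        apply div_le_div_of_nonneg_left (by norm_num) (by linarith) (by linarith)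
      linarith
  have hhit : 1/(4*ρ) ≤ ∑ z ∈ B i₀, π (t-1-i₀) z := hinv i₀ hi₀le hleast
  refine ⟨t-1-i₀, by omega, B i₀, Ob (i₀+1), ?_, hhit, hstop, ?_⟩
  · -- disjointness
    rw [Finset.disjoint_left]
    intro z hzB hzO
    simp only [hB, Finset.mem_filter, Finset.mem_univ, true_and] at hzB
    simp only [hOb, Finset.mem_filter, Finset.mem_univ, true_and] at hzO
    have htri : dist (c i₀) (c (i₀+1)) ≤ dist (c i₀) z + dist z (c (i₀+1)) :=
      dist_triangle _ _ _
    rw [hcc] at htri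
    rw [dist_comm] at hzO
    have hij : ((i₀:ℝ) + ((i₀:ℝ)+1)) * Δ ≤ (2*(t:ℝ)-1) * Δ := by
      apply mul_le_mul_of_nonneg_right _ (le_of_lt hΔ)
      have : (i₀:ℝ) ≤ (t:ℝ) - 1 := by
        have : ((i₀:ℕ):ℝ) ≤ ((t-1:ℕ):ℝ) := by exact_mod_cast hi₀le
        rw [Nat.cast_sub ht] at this
        simpa using this
      linarith
    rw [hd] at htri
    push_cast at htri hzO hzB hij
    nlinarith
  · -- the gap property
    intro S hAS hOS
    obtain ⟨z₀, hz₀⟩ := hAS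
    rw [Finset.mem_inter] at hz₀
    have hz₀B := hz₀.1
    simp only [hB, Finset.mem_filter, Finset.mem_univ, true_and] at hz₀B
    have hSne : S.Nonempty := ⟨z₀, hz₀.2⟩
    have hup : mdist (c i₀) S ≤ (i₀:ℝ) * Δ := le_trans (mdist_le _ hz₀.2) hz₀B
    have hlow : ((i₀:ℝ)+1) * Δ ≤ mdist (c (i₀+1)) S := by
      apply le_mdist hSne
      intro z hzS
      have hznO : z ∉ Ob (i₀+1) := by
        intro hmem
        have : z ∈ Ob (i₀+1) ∩ S := Finset.mem_inter.mpr ⟨hmem, hzS⟩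
        rw [hOS] at this
        exact absurd this (Finset.notMem_empty z)
      simp only [hOb, Finset.mem_filter, Finset.mem_univ, true_and, not_lt] at hznO
      push_cast at hznO ⊢
      exact hznO
    have hgap : Δ ≤ |mdist (c i₀) S - mdist (c (i₀+1)) S| := by
      rw [abs_sub_comm]
      rw [le_abs]
      left
      push_cast at hlow
      linarith
    by_cases h : i₀ % 2 = 0
    · have h1 : (i₀+1) % 2 ≠ 0 := by omega
      have e1 : c i₀ = u := by simp [hc, h]
      have e2 : c (i₀+1) = y := by simp [hc, h1]
      rwa [e1, e2] at hgap
    · have h1 : (i₀+1) % 2 = 0 := by omega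
      have e1 : c i₀ = y := by simp [hc, h]
      have e2 : c (i₀+1) = u := by simp [hc, h1]
      rw [e1, e2, abs_sub_comm] at hgap
      exact hgap

end Chain

lemma sum_geom_Icc_le (k : ℕ) : ∑ t ∈ Finset.Icc 1 k, ((1:ℝ)/2)^t ≤ 1 := by
  have key : ∀ k : ℕ, ∑ t ∈ Finset.Icc 1 k, ((1:ℝ)/2)^t = 1 - (1/2)^k := by
    intro k
    induction k with
    | zero => simp
    | succ k ih =>
      rw [Finset.sum_Icc_succ_top (by omega), ih]
      ring
  rw [key k]
  have : (0:ℝ) ≤ (1/2)^k := by positivity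
  linarith

set_option maxHeartbeats 2000000 in
/-- Lossless prioritized Matousek embedding: there is a constant `C > 0` such that for
every `k ≥ 1`, every `n`-point metric space (`n ≥ 2`) with priority ordering
`x : Fin n ≃ X` embeds into `ℓ∞^m` with `m ≤ C · k · n^{1/k} · log n`, via a
non-expanding map `f` such that every pair containing `x j` is contracted by a factor
of at most `2⌈k·log(j+1)/log n⌉ − 1`. -/
theorem matousek_embedding_prioritized_distortion :
    ∃ C : ℝ, C > 0 ∧
      ∀ (k n : ℕ), 1 ≤ k → 2 ≤ n →
      ∀ (X : Type) [MetricSpace X] [Fintype X], Fintype.card X = n →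
      ∀ (x : Fin n ≃ X),
      ∃ m : ℕ, (m : ℝ) ≤ C * k * (n : ℝ) ^ ((1 : ℝ) / k) * Real.log n ∧
      ∃ f : X → (Fin m → ℝ),
        (∀ u w : X, ‖f u - f w‖ ≤ dist u w) ∧
        (∀ (j : Fin n) (y : X),
          ‖f (x j) - f y‖ ≥ dist (x j) y /
            ((2 * max 1 ⌈((k : ℝ) * Real.log (((j : ℕ) : ℝ) + 1)) / Real.log n⌉ - 1 : ℤ) : ℝ)) := by
  classical
  refine ⟨100, by norm_num, ?_⟩
  intro k n hk hn X _ _ hcard x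
  -- basic positivity facts
  have hn1 : (1:ℝ) < (n:ℝ) := by exact_mod_cast hn
  have hn0 : (0:ℝ) < (n:ℝ) := by linarith
  have hL : 0 < Real.log n := Real.log_pos hn1
  have hk0 : (0:ℝ) < (k:ℝ) := by exact_mod_cast hk
  set nk : ℝ := (n:ℝ) ^ ((1:ℝ)/k) with hnk
  have hnk1 : 1 ≤ nk := Real.one_le_rpow hn1.le (by positivity)
  have hnk0 : 0 < nk := by linarith
  set ρ : ℝ := 2 * nk with hρdef
  have hρ2 : 2 ≤ ρ := by rw [hρdef]; linarith
  have hρ0 : 0 < ρ := by linarith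
  -- the priority-level function
  set T : ℕ → ℕ :=
    fun r => (max 1 ⌈((k:ℝ) * Real.log ((r:ℝ)+1)) / Real.log n⌉).toNat with hTdef
  have hT1 : ∀ r, 1 ≤ T r := by
    intro r
    rw [hTdef]
    have h2 : (1:ℤ) ≤ max 1 ⌈((k:ℝ) * Real.log ((r:ℝ)+1)) / Real.log n⌉ := le_max_left _ _
    simpa using Int.toNat_le_toNat h2
  have hTcast : ∀ r, ((T r : ℤ)) = max 1 ⌈((k:ℝ) * Real.log ((r:ℝ)+1)) / Real.log n⌉ := by
    intro r
    rw [hTdef]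
    have h2 : (0:ℤ) ≤ max 1 ⌈((k:ℝ) * Real.log ((r:ℝ)+1)) / Real.log n⌉ :=
      le_trans zero_le_one (le_max_left _ _)
    exact Int.toNat_of_nonneg h2
  have hTk : ∀ r : ℕ, r < n → T r ≤ k := by
    intro r hr
    have hlog : Real.log ((r:ℝ)+1) ≤ Real.log n := by
      apply Real.log_le_log (by positivity)
      have : (r:ℝ) + 1 ≤ (n:ℝ) := by exact_mod_cast hr
      exact this
    have hceil : ⌈((k:ℝ) * Real.log ((r:ℝ)+1)) / Real.log n⌉ ≤ (k:ℤ) := by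
      apply Int.ceil_le.mpr
      push_cast
      rw [div_le_iff₀ hL]
      calc (k:ℝ) * Real.log ((r:ℝ)+1) ≤ (k:ℝ) * Real.log n :=
            mul_le_mul_of_nonneg_left hlog hk0.le
        _ = (k:ℝ) * Real.log n := rfl
    have h1k : (1:ℤ) ≤ (k:ℤ) := by exact_mod_cast hk
    have : ((T r : ℤ)) ≤ (k:ℤ) := by
      rw [hTcast r]
      exact max_le h1k hceil
    exact_mod_cast this
  -- (r+1) ≤ nk ^ (T r)
  have hTpow : ∀ r : ℕ, ((r:ℝ)+1) ≤ nk ^ (T r) := by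
    intro r
    have hx : ((k:ℝ) * Real.log ((r:ℝ)+1)) / Real.log n ≤ ((T r : ℤ) : ℝ) := by
      rw [hTcast r]
      push_cast
      calc ((k:ℝ) * Real.log ((r:ℝ)+1)) / Real.log n
          ≤ (⌈((k:ℝ) * Real.log ((r:ℝ)+1)) / Real.log n⌉ : ℝ) := Int.le_ceil _
        _ ≤ _ := by
            have := le_max_right ((1:ℤ)) ⌈((k:ℝ) * Real.log ((r:ℝ)+1)) / Real.log n⌉
            exact_mod_cast this
    have hx' : (k:ℝ) * Real.log ((r:ℝ)+1) ≤ ((T r : ℝ)) * Real.log n := by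
      rw [div_le_iff₀ hL] at hx
      push_cast at hx
      linarith
    have hlogle : Real.log ((r:ℝ)+1) ≤ ((T r : ℝ)) * Real.log n / k := by
      rw [le_div_iff₀ hk0]
      calc Real.log ((r:ℝ)+1) * k = k * Real.log ((r:ℝ)+1) := by ring
        _ ≤ ((T r : ℝ)) * Real.log n := hx'
    have hnkpow : nk ^ (T r) = (n:ℝ) ^ (((T r : ℝ)) * ((1:ℝ)/k)) := by
      rw [hnk, ← Real.rpow_natCast ((n:ℝ) ^ ((1:ℝ)/k)) (T r), ← Real.rpow_mul hn0.le]
      ring_nf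
    rw [hnkpow, Real.rpow_def_of_pos hn0]
    have : (r:ℝ) + 1 = Real.exp (Real.log ((r:ℝ)+1)) := (Real.exp_log (by positivity)).symm
    rw [this]
    apply Real.exp_le_exp.mpr
    calc Real.log ((r:ℝ)+1) ≤ ((T r : ℝ)) * Real.log n / k := hlogle
      _ = Real.log n * ((T r : ℝ) * (1/k)) := by ring

  -- weights and sampling probabilities
  set wr : ℕ → ℝ := fun r => 1/(4 * ρ ^ (T r)) with hwrdef
  have hwr0 : ∀ r, 0 < wr r := by
    intro r; rw [hwrdef]; positivity
  set pii : ℕ → X → ℝ := fun s z => min (1/2) (ρ^s * wr ((x.symm z : Fin n) : ℕ)) with hpiidef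
  have hpii0 : ∀ (s : ℕ) (z : X), 0 ≤ pii s z := by
    intro s z
    rw [hpiidef]
    exact le_min (by norm_num) (by positivity)
  have hpii12 : ∀ (s : ℕ) (z : X), pii s z ≤ 1/2 := fun s z => min_le_left _ _
  have hpiimono : ∀ (s : ℕ) (z : X), pii (s+1) z ≤ ρ * pii s z := by
    intro s z
    rw [hpiidef]
    simp only
    have hmin : ρ * min (1/2) (ρ^s * wr ((x.symm z : Fin n) : ℕ))
        = min (ρ * (1/2)) (ρ * (ρ^s * wr ((x.symm z : Fin n) : ℕ))) := by
      rcases le_total ((1:ℝ)/2) (ρ^s * wr ((x.symm z : Fin n) : ℕ)) with h | h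
      · rw [min_eq_left h, min_eq_left (by nlinarith)]
      · rw [min_eq_right h, min_eq_right (by nlinarith)]
    rw [hmin]
    apply le_min
    · calc min (1/2) (ρ^(s+1) * wr ((x.symm z : Fin n) : ℕ)) ≤ 1/2 := min_le_left _ _
        _ ≤ ρ * (1/2) := by nlinarith
    · calc min (1/2) (ρ^(s+1) * wr ((x.symm z : Fin n) : ℕ))
          ≤ ρ^(s+1) * wr ((x.symm z : Fin n) : ℕ) := min_le_right _ _
        _ = ρ * (ρ^s * wr ((x.symm z : Fin n) : ℕ)) := by rw [pow_succ]; ring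
  have hstarteq : ∀ j : Fin n, pii (T (j:ℕ) - 1) (x j) = 1/(4*ρ) := by
    intro j
    rw [hpiidef]
    simp only [Equiv.symm_apply_apply]
    have ht1 := hT1 (j:ℕ)
    have hpow : ρ ^ (T (j:ℕ)) = ρ ^ (T (j:ℕ) - 1) * ρ := by
      conv_lhs => rw [show T (j:ℕ) = (T (j:ℕ) - 1) + 1 by omega]
      rw [pow_succ]
    have heq : ρ^(T (j:ℕ) - 1) * wr (j:ℕ) = 1/(4*ρ) := by
      rw [hwrdef]
      simp only
      rw [hpow]
      have hρp : (0:ℝ) < ρ ^ (T (j:ℕ) - 1) := by positivity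
      field_simp
    rw [heq]
    apply min_eq_right
    rw [div_le_div_iff₀ (by linarith) (by norm_num)]
    linarith
  -- total mass bound
  have hsum_wr : ∑ j : Fin n, wr (j:ℕ) ≤ 1/4 := by
    have hmaps : ∀ j ∈ (Finset.univ : Finset (Fin n)), T ((j : Fin n):ℕ) ∈ Finset.Icc 1 k :=
      fun j _ => Finset.mem_Icc.mpr ⟨hT1 _, hTk _ j.isLt⟩
    have hfib := Finset.sum_fiberwise_of_maps_to hmaps (fun j : Fin n => wr (j:ℕ))
    rw [← hfib]
    have hfiber_bound : ∀ t ∈ Finset.Icc 1 k,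
        ∑ j ∈ Finset.univ.filter (fun j : Fin n => T (j:ℕ) = t), wr (j:ℕ)
          ≤ (1/4) * (1/2)^t := by
      intro t _
      have hcardb : (((Finset.univ.filter (fun j : Fin n => T (j:ℕ) = t))).card : ℝ)
          ≤ nk ^ t := by
        have hsubmap : ∀ j ∈ Finset.univ.filter (fun j : Fin n => T (j:ℕ) = t),
            (j : ℕ) ∈ Finset.range (⌊nk ^ t⌋₊) := by
          intro j hj
          rw [Finset.mem_filter] at hj
          have hTj : T (j:ℕ) = t := hj.2
          have hp := hTpow (j:ℕ)
          rw [hTj] at hp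
          have hfl : (j:ℕ) + 1 ≤ ⌊nk ^ t⌋₊ := Nat.le_floor (by push_cast; linarith)
          rw [Finset.mem_range]
          omega
        have hinj : Set.InjOn (fun j : Fin n => (j:ℕ))
            (Finset.univ.filter (fun j : Fin n => T (j:ℕ) = t)) :=
          fun a _ b _ h => Fin.ext h
        have hcard := Finset.card_le_card_of_injOn _ hsubmap hinj
        calc (((Finset.univ.filter (fun j : Fin n => T (j:ℕ) = t))).card : ℝ)
            ≤ ((Finset.range (⌊nk ^ t⌋₊)).card : ℝ) := by exact_mod_cast hcard
          _ = (⌊nk ^ t⌋₊ : ℝ) := by rw [Finset.card_range]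
          _ ≤ nk ^ t := Nat.floor_le (by positivity)
      have hconst : ∑ j ∈ Finset.univ.filter (fun j : Fin n => T (j:ℕ) = t), wr (j:ℕ)
          = (((Finset.univ.filter (fun j : Fin n => T (j:ℕ) = t))).card : ℝ)
              * (1/(4 * ρ^t)) := by
        rw [Finset.sum_congr rfl (fun j hj => ?_), Finset.sum_const, nsmul_eq_mul]
        rw [hwrdef]
        simp only
        rw [(Finset.mem_filter.mp hj).2]
      rw [hconst]
      have hρt : ρ^t = 2^t * nk^t := by rw [hρdef, mul_pow]
      have h2t : (0:ℝ) < (2:ℝ)^t := by positivity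
      have hnkt : (0:ℝ) < nk^t := by positivity
      calc (((Finset.univ.filter (fun j : Fin n => T (j:ℕ) = t))).card : ℝ) * (1/(4 * ρ^t))
          ≤ nk^t * (1/(4 * ρ^t)) := by
            apply mul_le_mul_of_nonneg_right hcardb (by positivity)
        _ = (1/4) * (1/2)^t := by
            rw [hρt, one_div, one_div, mul_inv, mul_inv]
            rw [div_pow, one_pow]
            field_simp
    calc ∑ t ∈ Finset.Icc 1 k, ∑ j ∈ Finset.univ.filter (fun j : Fin n => T (j:ℕ) = t), wr (j:ℕ)
        ≤ ∑ t ∈ Finset.Icc 1 k, (1/4) * (1/2)^t := Finset.sum_le_sum hfiber_bound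
      _ = (1/4) * ∑ t ∈ Finset.Icc 1 k, ((1:ℝ)/2)^t := by rw [Finset.mul_sum]
      _ ≤ (1/4) * 1 := by
          apply mul_le_mul_of_nonneg_left (sum_geom_Icc_le k) (by norm_num)
      _ = 1/4 := by ring
  have htotal : ∑ z : X, pii 0 z ≤ 1/2 := by
    have h1 : ∀ z : X, pii 0 z ≤ wr ((x.symm z : Fin n):ℕ) := by
      intro z
      rw [hpiidef]
      simp only [pow_zero, one_mul]
      exact min_le_right _ _
    calc ∑ z : X, pii 0 z ≤ ∑ z : X, wr ((x.symm z : Fin n):ℕ) :=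
          Finset.sum_le_sum (fun z _ => h1 z)
      _ = ∑ j : Fin n, wr (j:ℕ) := Equiv.sum_comp x.symm (fun j : Fin n => wr (j:ℕ))
      _ ≤ 1/4 := hsum_wr
      _ ≤ 1/2 := by norm_num

  -- per-pair chain data
  have H : ∀ q : Fin n × X, ∃ s, s < k ∧ ∃ A O : Finset X, Disjoint A O ∧
      (1/(4*ρ) ≤ ∑ z ∈ A, pii s z) ∧ (∑ z ∈ O, pii s z ≤ 1/2) ∧
      ∀ S : Finset X, (A ∩ S).Nonempty → (O ∩ S) = ∅ →
        dist (x q.1) q.2 / (2*((T ((q.1 : Fin n):ℕ)):ℝ) - 1)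
          ≤ |mdist (x q.1) S - mdist q.2 S| := by
    intro q
    obtain ⟨j, y⟩ := q
    by_cases hy : y = x j
    · refine ⟨T (j:ℕ) - 1, by have h1 := hTk (j:ℕ) j.isLt; have h2 := hT1 (j:ℕ); omega,
        {x j}, ∅, Finset.disjoint_empty_right _, ?_, by simp, ?_⟩
      · rw [Finset.sum_singleton, hstarteq j]
      · intro S _ _
        simp only
        rw [hy, dist_self, zero_div]
        exact abs_nonneg _
    · have ht1 : 1 ≤ T (j:ℕ) := hT1 _
      have htk : T (j:ℕ) ≤ k := hTk _ j.isLt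
      have hdpos : 0 < dist (x j) y := dist_pos.mpr (fun h => hy h.symm)
      have hden : (0:ℝ) < 2*((T (j:ℕ)):ℝ) - 1 := by
        have h1 : (1:ℝ) ≤ ((T (j:ℕ)):ℝ) := by exact_mod_cast ht1
        linarith
      have hΔ : 0 < dist (x j) y / (2*((T (j:ℕ)):ℝ) - 1) := div_pos hdpos hden
      have hd : dist (x j) y
          = (2*((T (j:ℕ)):ℝ)-1) * (dist (x j) y / (2*((T (j:ℕ)):ℝ) - 1)) := by
        field_simp
      have hstart : 1/(4*ρ) ≤ pii (T (j:ℕ)-1) (x j) := le_of_eq (hstarteq j).symm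
      obtain ⟨s, hst, A, O, hdisj, hhit, hmiss, hgap⟩ :=
        chain_lemma pii ρ hρ2 hpii0 hpiimono (x j) y (T (j:ℕ)) ht1 _ hΔ hd hstart htotal
      exact ⟨s, lt_of_lt_of_le hst htk, A, O, hdisj, hhit, hmiss, hgap⟩
  choose sfun hsk Afun Ofun hdisj hhit hmiss hgap using H
  -- per-coordinate success probability and number of coordinates
  set p : ℝ := (1/(4*ρ))/4 with hpdef
  have hp0 : 0 < p := by rw [hpdef]; positivity
  have hp32 : p = 1/(16*ρ) := by rw [hpdef]; ring
  have hp1 : p < 1 := by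
    rw [hp32, div_lt_one (by linarith)]
    linarith
  set M : ℕ := ⌈(96:ℝ) * nk * Real.log n⌉₊ with hMdef
  have hMlb : (96:ℝ) * nk * Real.log n ≤ (M:ℝ) := Nat.le_ceil _
  have hMfail : ((n:ℝ) * n) * (1-p)^M < 1 := by
    have hpM : 3 * Real.log n ≤ p * M := by
      rw [hp32, hρdef, div_mul_eq_mul_div, one_mul,
        le_div_iff₀ (by linarith : (0:ℝ) < 16*(2*nk))]
      calc 3 * Real.log n * (16*(2*nk)) = 96 * nk * Real.log n := by ring
        _ ≤ (M:ℝ) := hMlb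
    have h1p : (0:ℝ) ≤ 1 - p := by linarith
    have hstep : (1-p)^M ≤ Real.exp (-(p*M)) := by
      calc (1-p)^M ≤ (Real.exp (-p))^M := by
            apply pow_le_pow_left₀ h1p
            have := Real.add_one_le_exp (-p)
            linarith
        _ = Real.exp (-(p*(M:ℝ))) := by
            rw [← Real.exp_nat_mul]
            congr 1
            ring
    have hexpn : Real.exp (-(3*Real.log n)) = 1/((n:ℝ)*n*n) := by
      rw [Real.exp_neg]
      rw [show (3:ℝ)*Real.log n = Real.log n + (Real.log n + Real.log n) by ring]
      rw [Real.exp_add, Real.exp_add, Real.exp_log hn0]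
      field_simp
    calc ((n:ℝ) * n) * (1-p)^M ≤ ((n:ℝ)*n) * (1/((n:ℝ)*n*n)) := by
          apply mul_le_mul_of_nonneg_left _ (by positivity)
          calc (1-p)^M ≤ Real.exp (-(p*M)) := hstep
            _ ≤ Real.exp (-(3*Real.log n)) := Real.exp_le_exp.mpr (by linarith)
            _ = 1/((n:ℝ)*n*n) := hexpn
      _ = 1/n := by field_simp
      _ < 1 := by rw [div_lt_one hn0]; linarith
  -- greedy choice of coordinate sets, one family per level
  have hglev : ∀ s : ℕ, ∃ g : ℕ → Finset X,
      ∀ q ∈ Finset.univ.filter (fun q' : Fin n × X => sfun q' = s),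
        ∃ c < M, g c ∈ coverSets (Afun q) (Ofun q) := by
    intro s
    refine greedy_cover (pii s) (hpii0 s) (fun z => le_trans (hpii12 s z) (by norm_num))
      Afun Ofun p hp0 hp1 M _ ?_ ?_
    · intro q hq
      have hqs : sfun q = s := (Finset.mem_filter.mp hq).2
      have hhit' : 1/(4*ρ) ≤ ∑ z ∈ Afun q, pii s z := by rw [← hqs]; exact hhit q
      have hmiss' : ∑ z ∈ Ofun q, pii s z ≤ 1/2 := by rw [← hqs]; exact hmiss q
      have hε1 : (1/(4*ρ):ℝ) ≤ 1 := by
        rw [div_le_one (by linarith)]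
        linarith
      have := cover_prob_ge (pii s) (hpii0 s) (hpii12 s) (Afun q) (Ofun q) (hdisj q)
        (1/(4*ρ)) (by positivity) hε1 hhit' hmiss'
      rw [hpdef]
      exact this
    · calc ((Finset.univ.filter (fun q' : Fin n × X => sfun q' = s)).card : ℝ) * (1-p)^M
          ≤ ((n:ℝ)*n) * (1-p)^M := by
            apply mul_le_mul_of_nonneg_right _ (pow_nonneg (by linarith) M)
            have hcle : (Finset.univ.filter (fun q' : Fin n × X => sfun q' = s)).card
                ≤ Fintype.card (Fin n × X) := by
              apply le_trans (Finset.card_filter_le _ _)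
              rw [Finset.card_univ]
            rw [Fintype.card_prod, Fintype.card_fin, hcard] at hcle
            have : ((n*n : ℕ):ℝ) = (n:ℝ)*n := by push_cast; ring
            rw [← this]
            exact_mod_cast hcle
        _ < 1 := hMfail
  choose G hG using hglev
  -- assemble the final map
  have hMpos : 0 < M := by
    rw [hMdef]
    apply Nat.ceil_pos.mpr
    positivity
  refine ⟨k * M, ?_, ?_⟩
  · -- dimension bound
    have hlog2 : (0.6931471803:ℝ) < Real.log 2 := Real.log_two_gt_d9
    have hL2 : (1/2:ℝ) ≤ Real.log n := by
      have : Real.log 2 ≤ Real.log n := by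
        apply Real.log_le_log (by norm_num)
        exact_mod_cast hn
      linarith
    have hMub : (M:ℝ) ≤ 96*nk*Real.log n + 1 := by
      rw [hMdef]
      exact le_of_lt (Nat.ceil_lt_add_one (by positivity))
    push_cast
    have h1le : (1:ℝ) ≤ 2 * (nk * Real.log n) := by nlinarith
    calc (k:ℝ) * M ≤ k * (96*nk*Real.log n + 1) := by
          apply mul_le_mul_of_nonneg_left hMub (by positivity)
      _ ≤ k * (98*(nk*Real.log n)) := by nlinarith
      _ ≤ 100 * k * nk * Real.log n := by nlinarith
  · set f : X → Fin (k*M) → ℝ :=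
      fun u c => mdist u (G ((c:ℕ) / M) ((c:ℕ) % M)) with hfdef
    refine ⟨f, ?_, ?_⟩
    · intro u w
      rw [pi_norm_le_iff_of_nonneg dist_nonneg]
      intro i
      rw [hfdef]
      simp only [Pi.sub_apply, Real.norm_eq_abs]
      exact abs_mdist_sub_le u w _
    · intro j y
      have hqmem : (j, y) ∈ Finset.univ.filter
          (fun q' : Fin n × X => sfun q' = sfun (j, y)) :=
        Finset.mem_filter.mpr ⟨Finset.mem_univ _, rfl⟩
      obtain ⟨c, hc, hcov⟩ := hG (sfun (j, y)) (j, y) hqmem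
      rw [mem_coverSets] at hcov
      have hslt : sfun (j, y) < k := hsk (j, y)
      have hidx : c + sfun (j, y) * M < k * M := by
        calc c + sfun (j, y) * M < M + sfun (j, y) * M := by omega
          _ = (sfun (j, y) + 1) * M := by ring
          _ ≤ k * M := Nat.mul_le_mul_right M hslt
      have hdiv : (c + sfun (j, y) * M) / M = sfun (j, y) := by
        rw [Nat.add_mul_div_right _ _ hMpos, Nat.div_eq_of_lt hc]
        omega
      have hmod : (c + sfun (j, y) * M) % M = c := by
        rw [Nat.add_mul_mod_self_right, Nat.mod_eq_of_lt hc]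
      have hgapq := hgap (j, y) _ hcov.1 hcov.2
      have hdeneq : ((2 * max 1 ⌈((k : ℝ) * Real.log (((j : ℕ) : ℝ) + 1)) / Real.log n⌉
            - 1 : ℤ) : ℝ) = 2*((T ((j : Fin n):ℕ)):ℝ) - 1 := by
        rw [show (max 1 ⌈((k : ℝ) * Real.log (((j : ℕ) : ℝ) + 1)) / Real.log n⌉ : ℤ)
            = ((T ((j : Fin n):ℕ) : ℤ)) from (hTcast _).symm]
        push_cast
        ring
      rw [ge_iff_le, hdeneq]
      have hcomp : |f (x j) ⟨c + sfun (j, y) * M, hidx⟩ - f y ⟨c + sfun (j, y) * M, hidx⟩|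
          ≤ ‖f (x j) - f y‖ := by
        have hnp := norm_le_pi_norm (f (x j) - f y) ⟨c + sfun (j, y) * M, hidx⟩
        rw [Pi.sub_apply, Real.norm_eq_abs] at hnp
        exact hnp
      have hfi : f (x j) ⟨c + sfun (j, y) * M, hidx⟩ = mdist (x j) (G (sfun (j, y)) c) := by
        rw [hfdef]
        simp only
        rw [hdiv, hmod]
      have hfyi : f y ⟨c + sfun (j, y) * M, hidx⟩ = mdist y (G (sfun (j, y)) c) := by
        rw [hfdef]
        simp only
        rw [hdiv, hmod]
      calc dist (x j) y / (2*((T ((j : Fin n):ℕ)):ℝ) - 1)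
          ≤ |mdist (x j) (G (sfun (j, y)) c) - mdist y (G (sfun (j, y)) c)| := hgapq
        _ = |f (x j) ⟨c + sfun (j, y) * M, hidx⟩ - f y ⟨c + sfun (j, y) * M, hidx⟩| := by
            rw [hfi, hfyi]
        _ ≤ ‖f (x j) - f y‖ := hcomp
end

section
/- Let (X, d) be a finite metric space with |X| = n, let x : Fin n → X be a priority ordering (a bijection; x j has priority (j : ℕ) + 1), and let α : ℕ → ℝ be a proper priority function. Then there exists a function ρ : X → X → ℝ such that: (i) ρ is symmetric (ρ a b = ρ b a) and ρ a a = 0 for all a; (ii) ρ satisfies the strong (ultrametric) triangle inequality ρ a c ≤ max (ρ a b) (ρ b c) for all a, b, c ∈ X; (iii) the embedding is non-contractive: d(a, b) ≤ ρ a b for all a, b ∈ X; and (iv) for all i, j : Fin n, ρ (x i) (x j) ≤ 2 · α (min (i : ℕ) (j : ℕ) + 1) · d(x i, x j). That is, X embeds into an ultrametric with prioritized distortion 2α(j). -/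
/-!
Weight each pair by `w(a, b) = 2 α(min(rank a, rank b) + 1) d(a, b)` and let `ρ(u, v)` be the
least `t` such that `u` and `v` are joined by a chain whose steps all have weight `≤ t`.
This bottleneck distance is an ultrametric lying below `w`, which gives the distortion bound.
For `d ≤ ρ`, take a simple chain from `u` to `v` with steps of weight `≤ t`: a step from `a` to
`b` has length at most `t/2 · (1/α(rank a + 1) + 1/α(rank b + 1))`, and since a simple chain
visits each point once, summing over the steps gives `d(u, v) ≤ t · ∑ 1/α(i) ≤ t`.
-/

/-- A proper priority function: positive on `i ≥ 1`, nondecreasing (for `i ≥ 1`), and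
with `∑_{i=1}^∞ 1/α(i)` summable with sum `< 1`. -/
def IsProperPriority (α : ℕ → ℝ) : Prop :=
  (∀ i : ℕ, 1 ≤ i → 0 < α i) ∧
  (∀ i j : ℕ, 1 ≤ i → i ≤ j → α i ≤ α j) ∧
  Summable (fun i : ℕ => 1 / α (i + 1)) ∧
  ∑' i : ℕ, 1 / α (i + 1) < 1

open Function

section Bottleneck

variable {X : Type*}

def sublevelGraph (w : X → X → ℝ) (t : ℝ) : SimpleGraph X :=
  SimpleGraph.fromRel fun a b => w a b ≤ t

/-- The bottleneck (minimax path) distance of `w`. The constraint `0 ≤ t` keeps the set bounded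
below, so that `sInf` is not a junk value. -/
noncomputable def minimaxDist (w : X → X → ℝ) (u v : X) : ℝ :=
  sInf {t | 0 ≤ t ∧ (sublevelGraph w t).Reachable u v}

variable {w : X → X → ℝ} {u v : X} {s t : ℝ}

lemma sublevelGraph_mono (h : s ≤ t) : sublevelGraph w s ≤ sublevelGraph w t := by
  intro a b hab
  rw [sublevelGraph, SimpleGraph.fromRel_adj] at hab ⊢
  exact ⟨hab.1, hab.2.imp (·.trans h) (·.trans h)⟩

lemma reachable_sublevelGraph_of_le (h : w u v ≤ t) : (sublevelGraph w t).Reachable u v := by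
  by_cases huv : u = v
  · exact huv ▸ SimpleGraph.Reachable.refl u
  · exact SimpleGraph.Adj.reachable ((SimpleGraph.fromRel_adj _ _ _).2 ⟨huv, .inl h⟩)

lemma minimaxDist_le_of_reachable (ht : 0 ≤ t) (h : (sublevelGraph w t).Reachable u v) :
    minimaxDist w u v ≤ t :=
  csInf_le ⟨0, fun _ hs => hs.1⟩ ⟨ht, h⟩

lemma minimaxDist_le (hw : 0 ≤ w u v) : minimaxDist w u v ≤ w u v :=
  minimaxDist_le_of_reachable hw (reachable_sublevelGraph_of_le le_rfl)

lemma le_minimaxDist {D : ℝ} (h : ∀ t, 0 ≤ t → (sublevelGraph w t).Reachable u v → D ≤ t) :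
    D ≤ minimaxDist w u v :=
  le_csInf ⟨max (w u v) 0, le_max_right _ _, reachable_sublevelGraph_of_le (le_max_left _ _)⟩
    fun t ht => h t ht.1 ht.2

lemma minimaxDist_nonneg : 0 ≤ minimaxDist w u v :=
  le_minimaxDist fun _ ht _ => ht

lemma minimaxDist_self : minimaxDist w u u = 0 :=
  (minimaxDist_le_of_reachable le_rfl (SimpleGraph.Reachable.refl u)).antisymm minimaxDist_nonneg

lemma minimaxDist_comm : minimaxDist w u v = minimaxDist w v u := by
  simp only [minimaxDist, SimpleGraph.reachable_comm]

lemma reachable_of_minimaxDist_lt (h : minimaxDist w u v < t) :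
    (sublevelGraph w t).Reachable u v := by
  by_contra hne
  refine h.not_ge (le_minimaxDist fun s _ hs => ?_)
  by_contra hst
  exact hne (hs.mono (sublevelGraph_mono (le_of_not_ge hst)))

lemma minimaxDist_le_max (a b c : X) :
    minimaxDist w a c ≤ max (minimaxDist w a b) (minimaxDist w b c) := by
  refine le_of_forall_gt_imp_ge_of_dense fun t ht => minimaxDist_le_of_reachable ?_ ?_
  · exact minimaxDist_nonneg.trans ((le_max_left _ _).trans ht.le)
  · exact (reachable_of_minimaxDist_lt ((le_max_left _ _).trans_lt ht)).trans
      (reachable_of_minimaxDist_lt ((le_max_right _ _).trans_lt ht))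

end Bottleneck

section Paths

variable {X : Type*}

lemma dist_le_sum_dist_darts [PseudoMetricSpace X] {G : SimpleGraph X} {u v : X}
    (p : G.Walk u v) : dist u v ≤ (p.darts.map fun d => dist d.fst d.snd).sum := by
  induction p with
  | nil => simp
  | cons _ p ih =>
    simp only [SimpleGraph.Walk.darts_cons, List.map_cons, List.sum_cons]
    exact (dist_triangle _ _ _).trans (add_le_add le_rfl ih)

lemma List.Nodup.sum_map_comp_le_tsum {β : Type*} {l : List X} (hl : l.Nodup) {f : X → β}
    (hf : Injective f) {g : β → ℝ} (hg : 0 ≤ g) (hs : Summable g) :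
    (l.map fun x => g (f x)).sum ≤ ∑' i, g i := by
  classical
  rw [← List.sum_toFinset _ hl, ← Finset.sum_image hf.injOn]
  exact hs.sum_le_tsum _ fun i _ => hg i

lemma SimpleGraph.Walk.IsPath.sum_darts_le_two_mul_tsum {β : Type*} {G : SimpleGraph X}
    {u v : X} {p : G.Walk u v} (hp : p.IsPath) {f : X → β} (hf : Injective f) {g : β → ℝ}
    (hg : 0 ≤ g) (hs : Summable g) :
    (p.darts.map fun d => g (f d.fst) + g (f d.snd)).sum ≤ 2 * ∑' i, g i := by
  have hfst : (p.darts.map fun d => g (f d.fst)).sum ≤ ∑' i, g i := by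
    have := (hp.support_nodup.sublist p.support.dropLast_sublist).sum_map_comp_le_tsum hf hg hs
    rw [← p.map_fst_darts, List.map_map] at this
    exact this
  have hsnd : (p.darts.map fun d => g (f d.snd)).sum ≤ ∑' i, g i := by
    have := (hp.support_nodup.sublist p.support.tail_sublist).sum_map_comp_le_tsum hf hg hs
    rw [← p.map_snd_darts, List.map_map] at this
    exact this
  rw [List.sum_map_add]
  linarith

end Paths

section Priority

variable {X : Type*} [PseudoMetricSpace X] {α : ℕ → ℝ} {rank : X → ℕ}

lemma IsProperPriority.pos_succ (hα : IsProperPriority α) (i : ℕ) : 0 < α (i + 1) :=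
  hα.1 (i + 1) (Nat.le_add_left 1 i)

def priorityWeight (α : ℕ → ℝ) (rank : X → ℕ) (a b : X) : ℝ :=
  2 * α (min (rank a) (rank b) + 1) * dist a b

lemma priorityWeight_comm (a b : X) : priorityWeight α rank a b = priorityWeight α rank b a := by
  rw [priorityWeight, priorityWeight, min_comm, dist_comm]

lemma priorityWeight_nonneg (hα : IsProperPriority α) (a b : X) :
    0 ≤ priorityWeight α rank a b :=
  mul_nonneg (mul_nonneg zero_le_two (hα.pos_succ _).le) dist_nonneg

lemma dist_le_of_priorityWeight_le (hα : IsProperPriority α) {a b : X} {t : ℝ} (ht : 0 ≤ t)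
    (h : priorityWeight α rank a b ≤ t) :
    dist a b ≤ t / 2 * (1 / α (rank a + 1) + 1 / α (rank b + 1)) := by
  have hαm := hα.pos_succ (min (rank a) (rank b))
  have hm : 1 / α (min (rank a) (rank b) + 1) ≤ 1 / α (rank a + 1) + 1 / α (rank b + 1) := by
    have ha := one_div_pos.2 (hα.pos_succ (rank a))
    have hb := one_div_pos.2 (hα.pos_succ (rank b))
    rcases min_choice (rank a) (rank b) with hmin | hmin <;> rw [hmin] <;> linarith
  rw [priorityWeight] at h
  calc dist a b ≤ t / (2 * α (min (rank a) (rank b) + 1)) := by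
        rw [le_div_iff₀ (by positivity)]
        linarith
    _ = t / 2 * (1 / α (min (rank a) (rank b) + 1)) := by ring
    _ ≤ _ := by gcongr

lemma dist_le_of_reachable_sublevelGraph_priorityWeight (hrank : Injective rank)
    (hα : IsProperPriority α) {u v : X} {t : ℝ} (ht : 0 ≤ t)
    (h : (sublevelGraph (priorityWeight α rank) t).Reachable u v) : dist u v ≤ t := by
  set g : ℕ → ℝ := fun i => 1 / α (i + 1)
  have hg : 0 ≤ g := fun i => (one_div_pos.2 (hα.pos_succ i)).le
  obtain ⟨p, hp⟩ := h.exists_isPath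
  have hstep : ∀ d ∈ p.darts, dist d.fst d.snd ≤ t / 2 * (g (rank d.fst) + g (rank d.snd)) := by
    intro d _
    have hadj := (SimpleGraph.fromRel_adj _ _ _).1 d.adj
    rw [priorityWeight_comm d.snd, or_self] at hadj
    exact dist_le_of_priorityWeight_le hα ht hadj.2
  calc dist u v ≤ (p.darts.map fun d => dist d.fst d.snd).sum := dist_le_sum_dist_darts p
    _ ≤ (p.darts.map fun d => t / 2 * (g (rank d.fst) + g (rank d.snd))).sum :=
        List.sum_le_sum hstep
    _ = t / 2 * (p.darts.map fun d => g (rank d.fst) + g (rank d.snd)).sum := by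
        rw [List.sum_map_mul_left]
    _ ≤ t / 2 * (2 * ∑' i, g i) := by
        gcongr
        exact hp.sum_darts_le_two_mul_tsum hrank hg hα.2.2.1
    _ ≤ t := by nlinarith [hα.2.2.2]

lemma dist_le_minimaxDist_priorityWeight (hrank : Injective rank) (hα : IsProperPriority α)
    (u v : X) : dist u v ≤ minimaxDist (priorityWeight α rank) u v :=
  le_minimaxDist fun _ ht h => dist_le_of_reachable_sublevelGraph_priorityWeight hrank hα ht h

end Priority

theorem prioritized_embedding_into_ultrametric_general
    (X : Type*) [MetricSpace X] (n : ℕ)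
    (x : Fin n ≃ X) (α : ℕ → ℝ) (hα : IsProperPriority α) :
    ∃ ρ : X → X → ℝ,
      (∀ a b : X, ρ a b = ρ b a) ∧
      (∀ a : X, ρ a a = 0) ∧
      (∀ a b c : X, ρ a c ≤ max (ρ a b) (ρ b c)) ∧
      (∀ a b : X, dist a b ≤ ρ a b) ∧
      (∀ i j : Fin n,
        ρ (x i) (x j) ≤ 2 * α (min (i : ℕ) (j : ℕ) + 1) * dist (x i) (x j)) := by
  set rank : X → ℕ := fun a => x.symm a
  have hrank : Injective rank := Fin.val_injective.comp x.symm.injective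
  refine ⟨minimaxDist (priorityWeight α rank), fun _ _ => minimaxDist_comm,
    fun _ => minimaxDist_self, minimaxDist_le_max, dist_le_minimaxDist_priorityWeight hrank hα,
    fun i j => ?_⟩
  simpa [priorityWeight, rank] using
    minimaxDist_le (priorityWeight_nonneg (rank := rank) hα (x i) (x j))

/-- Prioritized embedding of a finite metric space into a single ultrametric with
prioritized distortion `2α(j)`: the ultrametric `ρ` dominates `d` and satisfies
`ρ(x_i, x_j) ≤ 2·α(min(i,j)+1)·d(x_i, x_j)`. -/
theorem prioritized_embedding_into_ultrametric
    (X : Type*) [MetricSpace X] [Fintype X] (n : ℕ) (hcard : Fintype.card X = n)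
    (x : Fin n ≃ X) (α : ℕ → ℝ) (hα : IsProperPriority α) :
    ∃ ρ : X → X → ℝ,
      (∀ a b : X, ρ a b = ρ b a) ∧
      (∀ a : X, ρ a a = 0) ∧
      (∀ a b c : X, ρ a c ≤ max (ρ a b) (ρ b c)) ∧
      (∀ a b : X, dist a b ≤ ρ a b) ∧
      (∀ i j : Fin n,
        ρ (x i) (x j) ≤ 2 * α (min (i : ℕ) (j : ℕ) + 1) * dist (x i) (x j)) :=
  prioritized_embedding_into_ultrametric_general X n x α hα
end

section
/- Let (X, d) be a finite metric space with |X| = n ≥ 2, let x : Fin n → X be a priority ordering (a bijection; x j has priority (j : ℕ) + 1), let Δ = diam X be the diameter of X, and let α : ℕ → ℝ be a proper priority function. Then there exists a subset X₁ ⊆ X with X₁ nonempty and X₁ ≠ X such that for all i, j : Fin n with x i ∈ X₁ and x j ∉ X₁, one has Δ ≤ 2 · α (min (i : ℕ) (j : ℕ) + 1) · d(x i, x j). (That is, X can be split into two nonempty parts so that no separated pair incurs prioritized distortion more than 2α(·) at scale Δ.) -/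
/-!
Fix a diametral pair `c, b` and cut `X` by a closed ball `closedBall c r` with `0 ≤ r < Δ`,
so `c` is inside and `b` is outside. If `r` stays at distance at least
`ρ m = Δ / (2 α (m + 1))` from every `dist (x m) c`, then a separated pair `x i`, `x j` satisfies
`dist (x i) (x j) ≥ ρ i + ρ j ≥ ρ (min i j)`, which is the claim. Such an `r` exists because the
forbidden intervals have total length `Δ ∑ 1 / α (m + 1) < Δ`.
-/

open Metric MeasureTheory Set

lemma IsProperPriority.sum_range_lt_one {α : ℕ → ℝ} (hα : IsProperPriority α) (n : ℕ) :
    ∑ m ∈ Finset.range n, 1 / α (m + 1) < 1 :=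
  calc ∑ m ∈ Finset.range n, 1 / α (m + 1)
      ≤ ∑' m, 1 / α (m + 1) :=
        hα.2.2.1.sum_le_tsum _ fun m _ => (one_div_pos.2 (hα.1 (m + 1) (by omega))).le
    _ < 1 := hα.2.2.2

lemma IsProperPriority.sum_fin_two_mul_div_lt {α : ℕ → ℝ} (hα : IsProperPriority α) {Δ : ℝ}
    (hΔ : 0 < Δ) (n : ℕ) : ∑ m : Fin n, 2 * (Δ / (2 * α (m + 1))) < Δ := by
  have h2ρ (m : ℕ) : 2 * (Δ / (2 * α (m + 1))) = Δ * (1 / α (m + 1)) := by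
    have := hα.1 (m + 1) (by omega)
    field_simp
  simp only [h2ρ, ← Finset.mul_sum, Fin.sum_univ_eq_sum_range (fun m => 1 / α (m + 1)) n]
  nlinarith [hα.sum_range_lt_one n]

lemma exists_dist_eq_diam_univ (X : Type*) [PseudoMetricSpace X] [Finite X] [Nonempty X] :
    ∃ c b : X, dist c b = diam (univ : Set X) := by
  obtain ⟨⟨c, b⟩, hmax⟩ := Finite.exists_max fun p : X × X => dist p.1 p.2
  refine ⟨c, b, le_antisymm (dist_le_diam_of_mem finite_univ.isBounded trivial trivial) ?_⟩
  exact diam_le_of_forall_dist_le dist_nonneg fun u _ v _ => hmax (u, v)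

lemma exists_mem_Ico_forall_notMem_ball {ι : Type*} [Fintype ι] {a b : ℝ} (c ρ : ι → ℝ)
    (hρ : ∀ i, 0 ≤ ρ i) (hlen : ∑ i, 2 * ρ i < b - a) :
    ∃ r ∈ Ico a b, ∀ i, r ∉ ball (c i) (ρ i) := by
  by_contra! hcover
  have hvol : volume (Ico a b) ≤ ENNReal.ofReal (∑ i, 2 * ρ i) :=
    calc volume (Ico a b)
        ≤ volume (⋃ i, ball (c i) (ρ i)) := measure_mono fun r hr => mem_iUnion.2 (hcover r hr)
      _ ≤ ∑ i, volume (ball (c i) (ρ i)) := measure_iUnion_fintype_le _ _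
      _ = ENNReal.ofReal (∑ i, 2 * ρ i) := by
        simp only [Real.volume_ball]
        exact (ENNReal.ofReal_sum_of_nonneg fun i _ => by linarith [hρ i]).symm
  rw [Real.volume_Ico, ENNReal.ofReal_le_ofReal_iff
    (Finset.sum_nonneg fun i _ => by linarith [hρ i])] at hvol
  linarith

lemma add_le_dist_of_notMem_ball {X : Type*} [PseudoMetricSpace X] {c p q : X} {r ρp ρq : ℝ}
    (hp : p ∈ closedBall c r) (hq : q ∉ closedBall c r)
    (hrp : r ∉ ball (dist p c) ρp) (hrq : r ∉ ball (dist q c) ρq) :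
    ρp + ρq ≤ dist p q := by
  rw [mem_closedBall] at hp
  rw [mem_closedBall, not_le] at hq
  rw [mem_ball, Real.dist_eq, not_lt, abs_of_nonneg (by linarith)] at hrp
  rw [mem_ball, Real.dist_eq, not_lt, abs_of_nonpos (by linarith)] at hrq
  linarith [dist_triangle_left q c p, dist_comm p c]

/-- The partition step for the prioritized embedding into an ultrametric: a finite
metric space with at least 2 points can be split into a nonempty proper subset `X₁`
and its complement so that every separated pair `x_i ∈ X₁`, `x_j ∉ X₁` satisfies
`diam X ≤ 2·α(min(i,j)+1)·d(x_i, x_j)`. -/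
theorem prioritized_ultrametric_partition_step
    (X : Type*) [MetricSpace X] [Fintype X] (n : ℕ) (hn : 2 ≤ n)
    (hcard : Fintype.card X = n) (x : Fin n ≃ X) (α : ℕ → ℝ)
    (hα : IsProperPriority α) :
    ∃ X₁ : Set X, X₁.Nonempty ∧ X₁ ≠ Set.univ ∧
      ∀ i j : Fin n, x i ∈ X₁ → x j ∉ X₁ →
        Metric.diam (Set.univ : Set X) ≤
          2 * α (min (i : ℕ) (j : ℕ) + 1) * dist (x i) (x j) := by
  set Δ := diam (univ : Set X)
  have : Nontrivial X := Fintype.one_lt_card_iff_nontrivial.1 (by omega)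
  have hΔ : 0 < Δ := diam_pos nontrivial_univ finite_univ.isBounded
  have hαpos (m : ℕ) : 0 < 2 * α (m + 1) := by linarith [hα.1 (m + 1) (by omega)]
  set ρ : ℕ → ℝ := fun m => Δ / (2 * α (m + 1))
  have hρ (m : ℕ) : 0 ≤ ρ m := (div_pos hΔ (hαpos m)).le
  have hlen : ∑ m : Fin n, 2 * ρ m < Δ - 0 := (sub_zero Δ).symm ▸ hα.sum_fin_two_mul_div_lt hΔ n
  obtain ⟨c, b, hcb⟩ := exists_dist_eq_diam_univ X
  obtain ⟨r, ⟨hr0, hrΔ⟩, hr⟩ :=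
    exists_mem_Ico_forall_notMem_ball (fun m => dist (x m) c) (fun m => ρ m) (fun m => hρ m) hlen
  refine ⟨closedBall c r, nonempty_closedBall.2 hr0, fun h => ?_, fun i j hi hj => ?_⟩
  · have hb : b ∈ closedBall c r := h ▸ mem_univ b
    rw [mem_closedBall, dist_comm, hcb] at hb
    linarith
  · have hsep := add_le_dist_of_notMem_ball hi hj (hr i) (hr j)
    have hmin : ρ (min i j) ≤ ρ i + ρ j := by
      rcases min_choice (i : ℕ) j with h | h <;> rw [h] <;> linarith [hρ i, hρ j]
    have := (div_le_iff₀ (hαpos (min i j))).1 (hmin.trans hsep)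
    linarith
end

section
/- There exists a constant c' > 0 such that for all integers k ≥ 1 and i ≥ 0, the series ∑_{t = i+1}^∞ 2^{(2^t + 2)/k} · Real.exp (−(2 : ℝ)^{2^t / k + 2^t − 2^{i+1}}) is summable and its sum is at most c'. (This is the bound E[Y] = O(k · ln n) per value of s in the expected-dimension analysis: the t-th term bounds R(t)/(c·ln n) times the probability that a sampled set misses all copies of a point of S_i.) -/
/-!
Write `A = 2 ^ (i + 1 + t)`, `B = 2 ^ (i + 1)`, `x = 2 ^ (A / k)` and `y = 2 ^ (A - B)`. The `t`-th
term is `2 ^ (2 / k) * x * exp (-(x * y))`. Since `u * exp (-u) ≤ exp (-1)`, the factor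
`x * exp (-(x * y))` is at most `1 / y`, whatever `k` is; and `A - B ≥ t` gives `y ≥ 2 ^ t`.
So the terms are dominated by `4 * (1 / 2) ^ t`, uniformly in `k ≥ 1` and `i`.
-/

open Real

/-- `R(i + 1 + t) / (c ln n)` times the probability bound that a sampled set at density level
`i + 1 + t` misses all copies of a point of `S_i`. -/
noncomputable def expectedDimensionTerm (k i t : ℕ) : ℝ :=
  (2 : ℝ) ^ (((2 : ℝ) ^ (i + 1 + t) + 2) / (k : ℝ)) *
    Real.exp (-((2 : ℝ) ^ ((2 : ℝ) ^ (i + 1 + t) / (k : ℝ) +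
      (2 : ℝ) ^ (i + 1 + t) - (2 : ℝ) ^ (i + 1))))

lemma mul_exp_neg_mul_le_exp_neg_one_div (x : ℝ) {y : ℝ} (hy : 0 < y) :
    x * exp (-(x * y)) ≤ exp (-1) / y := by
  rw [le_div_iff₀ hy]
  calc x * exp (-(x * y)) * y = x * y * exp (-(x * y)) := by ring
    _ ≤ exp (-1) := mul_exp_neg_le_exp_neg_one _

lemma natCast_le_two_pow_add_sub_two_pow (m t : ℕ) :
    (t : ℝ) ≤ 2 ^ (m + t) - 2 ^ m := by
  have ht : (t : ℝ) + 1 ≤ 2 ^ t := by exact_mod_cast Nat.lt_two_pow_self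
  have hm : (1 : ℝ) ≤ 2 ^ m := one_le_pow₀ one_le_two
  rw [pow_add]
  nlinarith

lemma two_rpow_two_div_le_four {k : ℕ} (hk : 1 ≤ k) : (2 : ℝ) ^ ((2 : ℝ) / k) ≤ 4 := by
  have hk' : (1 : ℝ) ≤ k := by exact_mod_cast hk
  calc (2 : ℝ) ^ ((2 : ℝ) / k) ≤ 2 ^ (2 : ℝ) :=
        rpow_le_rpow_of_exponent_le one_le_two (div_le_self zero_le_two hk')
    _ = 4 := by norm_num [rpow_two]

lemma expectedDimensionTerm_nonneg (k i t : ℕ) : 0 ≤ expectedDimensionTerm k i t := by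
  unfold expectedDimensionTerm
  positivity

lemma expectedDimensionTerm_le {k : ℕ} (hk : 1 ≤ k) (i t : ℕ) :
    expectedDimensionTerm k i t ≤ 4 * (1 / 2) ^ t := by
  set A : ℝ := 2 ^ (i + 1 + t)
  set B : ℝ := 2 ^ (i + 1)
  set x : ℝ := 2 ^ (A / k)
  set y : ℝ := 2 ^ (A - B)
  have hy : (2 : ℝ) ^ t ≤ y := by
    rw [← rpow_natCast]
    exact rpow_le_rpow_of_exponent_le one_le_two (natCast_le_two_pow_add_sub_two_pow _ _)
  have hy₀ : 0 < y := by positivity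
  have hterm : expectedDimensionTerm k i t = 2 ^ ((2 : ℝ) / k) * (x * exp (-(x * y))) := by
    rw [expectedDimensionTerm, add_div, add_sub_assoc, rpow_add two_pos, rpow_add two_pos]
    ring
  calc expectedDimensionTerm k i t ≤ 4 * (exp (-1) / y) := by
        rw [hterm]
        gcongr
        · exact two_rpow_two_div_le_four hk
        · exact mul_exp_neg_mul_le_exp_neg_one_div x hy₀
    _ ≤ 4 * (1 / 2 ^ t) := by
        gcongr
        exact exp_le_one_iff.mpr (by norm_num)
    _ = 4 * (1 / 2) ^ t := by rw [one_div_pow]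

/-- Convergence of the expected-dimension series in the dimension-prioritized Matousek
embedding: there is a constant `c' > 0` such that for all `k ≥ 1` and `i ≥ 0`, the
series `∑_{t = i+1}^∞ 2^{(2^t + 2)/k} · exp(−2^{2^t/k + 2^t − 2^{i+1}})` (here
reindexed by `t = i + 1 + t'`) is summable with sum at most `c'`. -/
theorem matousek_expected_dimension_series_bound :
    ∃ c' : ℝ, 0 < c' ∧
      ∀ (k i : ℕ), 1 ≤ k →
        Summable (fun t : ℕ =>
          (2 : ℝ) ^ (((2 : ℝ) ^ (i + 1 + t) + 2) / (k : ℝ)) *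
            Real.exp (-((2 : ℝ) ^ ((2 : ℝ) ^ (i + 1 + t) / (k : ℝ) +
              (2 : ℝ) ^ (i + 1 + t) - (2 : ℝ) ^ (i + 1))))) ∧
        (∑' t : ℕ,
          (2 : ℝ) ^ (((2 : ℝ) ^ (i + 1 + t) + 2) / (k : ℝ)) *
            Real.exp (-((2 : ℝ) ^ ((2 : ℝ) ^ (i + 1 + t) / (k : ℝ) +
              (2 : ℝ) ^ (i + 1 + t) - (2 : ℝ) ^ (i + 1))))) ≤ c' := by
  refine ⟨8, by norm_num, fun k i hk => ?_⟩
  have hle := expectedDimensionTerm_le hk i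
  have hgeom : Summable fun t : ℕ => 4 * ((1 : ℝ) / 2) ^ t := summable_geometric_two.mul_left 4
  have hsum : Summable (expectedDimensionTerm k i) :=
    hgeom.of_nonneg_of_le (expectedDimensionTerm_nonneg k i) hle
  refine ⟨hsum, ?_⟩
  calc ∑' t, expectedDimensionTerm k i t ≤ ∑' t : ℕ, 4 * ((1 : ℝ) / 2) ^ t :=
        hsum.tsum_le_tsum hle hgeom
    _ = 8 := by rw [tsum_mul_left, tsum_geometric_two]; norm_num
end

section
/- There exists a constant C > 0 such that for all integers k ≥ 1 and i ≥ 0: ∑_{t = 0}^{i} 2^{(2^t + 2)/k} ≤ C · (2^{(2^i + 2)/k} + Real.logb 2 (k + 1) + 1). (This bounds the total number of coordinates, up to the factor k·ln n, that the dimension-prioritized Matousek embedding assigns to density levels 0 through i: the first ≈ log₂ k terms are each O(1), and the remaining terms are dominated by a geometric series ending at the last term.) -/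
/-!
Call `w t = 2 ^ ((2 ^ t + 2) / k)` the weight of level `t`. While `2 ^ t ≤ k` the exponent
is at most `3`, so each of these at most `log₂ k + 1` levels has weight at most `8`.
Once `k ≤ 2 ^ t`, the exponent of level `t + 1` exceeds that of level `t` by `2 ^ t / k ≥ 1`,
so the remaining weights decay at least geometrically with ratio `1/2` going down from `i`,
and their sum is at most `2 w i`.
-/

open Finset Real

noncomputable def levelWeight (k t : ℕ) : ℝ := (2 : ℝ) ^ (((2 : ℝ) ^ t + 2) / (k : ℝ))

lemma levelWeight_nonneg (k t : ℕ) : 0 ≤ levelWeight k t := (rpow_pos_of_pos two_pos _).le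

lemma levelWeight_le_eight {k t : ℕ} (hk : 0 < k) (h : 2 ^ t ≤ k) : levelWeight k t ≤ 8 := by
  have hkR : (0 : ℝ) < k := by exact_mod_cast hk
  have hexp : ((2 : ℝ) ^ t + 2) / k ≤ (3 : ℕ) := by
    rw [div_le_iff₀ hkR]
    have : ((2 ^ t : ℕ) : ℝ) ≤ k := by exact_mod_cast h
    push_cast at this ⊢
    have : (1 : ℝ) ≤ k := by exact_mod_cast hk
    linarith
  calc levelWeight k t ≤ (2 : ℝ) ^ ((3 : ℕ) : ℝ) :=
        rpow_le_rpow_of_exponent_le one_le_two hexp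
    _ = 8 := by norm_num

lemma two_pow_mul_sub_add_one_le {t i : ℕ} (h : t ≤ i) : 2 ^ t * (i - t + 1) ≤ 2 ^ i :=
  calc 2 ^ t * (i - t + 1) ≤ 2 ^ t * 2 ^ (i - t) := Nat.mul_le_mul_left _ Nat.lt_two_pow_self
    _ = 2 ^ i := by rw [← pow_add, Nat.add_sub_cancel' h]

lemma levelWeight_le_mul_half_pow {k t i : ℕ} (hk : 0 < k) (hkt : k ≤ 2 ^ t) (hti : t ≤ i) :
    levelWeight k t ≤ levelWeight k i * (1 / 2) ^ (i - t) := by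
  have hkR : (0 : ℝ) < k := by exact_mod_cast hk
  have hnat : k * (i - t) + 2 ^ t ≤ 2 ^ i :=
    calc k * (i - t) + 2 ^ t ≤ 2 ^ t * (i - t + 1) := by
          rw [mul_add_one]; gcongr
      _ ≤ 2 ^ i := two_pow_mul_sub_add_one_le hti
  have hexp : ((2 : ℝ) ^ t + 2) / k ≤ ((2 : ℝ) ^ i + 2) / k - ((i - t : ℕ) : ℝ) := by
    rw [le_sub_iff_add_le, div_add' _ _ _ hkR.ne', div_le_div_iff_of_pos_right hkR]
    have : (k : ℝ) * ((i - t : ℕ) : ℝ) + 2 ^ t ≤ 2 ^ i := by exact_mod_cast hnat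
    linarith
  calc levelWeight k t ≤ (2 : ℝ) ^ (((2 : ℝ) ^ i + 2) / k - ((i - t : ℕ) : ℝ)) :=
        rpow_le_rpow_of_exponent_le one_le_two hexp
    _ = levelWeight k i * (1 / 2) ^ (i - t) := by
        rw [rpow_sub two_pos, rpow_natCast, div_eq_mul_inv, one_div, inv_pow, levelWeight]

lemma sum_half_pow_sub_le_two (i : ℕ) : ∑ t ∈ range (i + 1), (1 / 2 : ℝ) ^ (i - t) ≤ 2 :=
  (sum_range_reflect (fun j ↦ (1 / 2 : ℝ) ^ j) (i + 1)).trans_le (sum_geometric_two_le _)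

lemma card_filter_two_pow_le (k i : ℕ) :
    #{t ∈ range (i + 1) | 2 ^ t ≤ k} ≤ Nat.log 2 k + 1 := by
  calc #{t ∈ range (i + 1) | 2 ^ t ≤ k} ≤ #(range (Nat.log 2 k + 1)) := by
        refine card_le_card fun t ht ↦ ?_
        rw [mem_range, Nat.lt_succ_iff]
        exact Nat.le_log_of_pow_le one_lt_two (mem_filter.mp ht).2
    _ = Nat.log 2 k + 1 := card_range _

lemma sum_levelWeight_filter_two_pow_le {k : ℕ} (hk : 0 < k) (i : ℕ) :
    ∑ t ∈ range (i + 1) with 2 ^ t ≤ k, levelWeight k t ≤ 8 * (logb 2 (k + 1) + 1) := by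
  have hlog : (Nat.log 2 k : ℝ) ≤ logb 2 (k + 1) :=
    calc (Nat.log 2 k : ℝ) ≤ logb (2 : ℕ) k := natLog_le_logb k 2
      _ ≤ logb 2 (k + 1) := by
        rw [Nat.cast_ofNat]
        exact logb_le_logb_of_le one_lt_two (by exact_mod_cast hk) (by linarith)
  have hcard : (#{t ∈ range (i + 1) | 2 ^ t ≤ k} : ℝ) ≤ Nat.log 2 k + 1 := by
    exact_mod_cast card_filter_two_pow_le k i
  calc ∑ t ∈ range (i + 1) with 2 ^ t ≤ k, levelWeight k t
      ≤ #{t ∈ range (i + 1) | 2 ^ t ≤ k} • (8 : ℝ) :=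
        sum_le_card_nsmul _ _ _ fun t ht ↦ levelWeight_le_eight hk (mem_filter.mp ht).2
    _ ≤ 8 * (logb 2 (k + 1) + 1) := by rw [nsmul_eq_mul]; linarith

lemma sum_levelWeight_filter_not_two_pow_le {k : ℕ} (hk : 0 < k) (i : ℕ) :
    ∑ t ∈ range (i + 1) with ¬2 ^ t ≤ k, levelWeight k t ≤ 2 * levelWeight k i := by
  calc ∑ t ∈ range (i + 1) with ¬2 ^ t ≤ k, levelWeight k t
      ≤ ∑ t ∈ range (i + 1) with ¬2 ^ t ≤ k, levelWeight k i * (1 / 2) ^ (i - t) := by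
        refine sum_le_sum fun t ht ↦ ?_
        obtain ⟨htr, htk⟩ := mem_filter.mp ht
        exact levelWeight_le_mul_half_pow hk (not_le.mp htk).le
          (Nat.lt_succ_iff.mp (mem_range.mp htr))
    _ ≤ ∑ t ∈ range (i + 1), levelWeight k i * (1 / 2) ^ (i - t) :=
        sum_le_sum_of_subset_of_nonneg (filter_subset _ _) fun t _ _ ↦
          mul_nonneg (levelWeight_nonneg k i) (by positivity)
    _ = levelWeight k i * ∑ t ∈ range (i + 1), (1 / 2 : ℝ) ^ (i - t) := (mul_sum _ _ _).symm
    _ ≤ levelWeight k i * 2 :=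
        mul_le_mul_of_nonneg_left (sum_half_pow_sub_le_two i) (levelWeight_nonneg k i)
    _ = 2 * levelWeight k i := mul_comm _ _

/-- Bounding the total number of coordinates (up to the factor `k · ln n`) assigned
to density levels `0..i` in the dimension-prioritized Matousek embedding:
`∑_{t=0}^{i} 2^{(2^t + 2)/k} ≤ C · (2^{(2^i + 2)/k} + log₂(k + 1) + 1)`. -/
theorem matousek_dimension_level_sum_bound :
    ∃ C : ℝ, 0 < C ∧
      ∀ (k i : ℕ), 1 ≤ k →
        ∑ t ∈ Finset.range (i + 1), (2 : ℝ) ^ (((2 : ℝ) ^ t + 2) / (k : ℝ)) ≤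
          C * ((2 : ℝ) ^ (((2 : ℝ) ^ i + 2) / (k : ℝ)) + Real.logb 2 ((k : ℝ) + 1) + 1) := by
  refine ⟨8, by norm_num, fun k i hk ↦ ?_⟩
  show ∑ t ∈ range (i + 1), levelWeight k t ≤ 8 * (levelWeight k i + logb 2 (k + 1) + 1)
  have hsmall := sum_levelWeight_filter_two_pow_le hk i
  have hlarge := sum_levelWeight_filter_not_two_pow_le hk i
  have hwi := levelWeight_nonneg k i
  rw [← sum_filter_add_sum_filter_not _ (fun t ↦ 2 ^ t ≤ k)]
  linarith
end

section
/- Let (X, d) be a metric space and let X₁, X₂ ⊆ X satisfy X₁ ∪ X₂ = X and X₁ ∩ X₂ = {s} for some point s, and suppose d(u, v) = d(u, s) + d(s, v) for all u ∈ X₁ and v ∈ X₂. Let m be a natural number and let f₁ : X₁ → (Fin m → ℝ) and f₂ : X₂ → (Fin m → ℝ) be non-expanding with respect to the supremum norm (‖fᵢ u − fᵢ w‖∞ ≤ d(u, w) for u, w in the respective domain), with f₁ s = 0 and f₂ s = 0. Define f : X → (Fin (m+1) → ℝ) by appending one coordinate: for u ∈ X₁, f u = f₁ u in the first m coordinates with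 last coordinate d(s, u); for u ∈ X₂, f u = f₂ u in the first m coordinates with last coordinate −d(s, u) (both definitions agree at s). Then: (i) f is non-expanding; (ii) for all u ∈ X₁ and v ∈ X₂, ‖f u − f v‖∞ = d(u, v); and (iii) for all u, w ∈ X₁, ‖f u − f w‖∞ ≥ ‖f₁ u − f₁ w‖∞, and for all u, w ∈ X₂, ‖f u − f w‖∞ ≥ ‖f₂ u − f₂ w‖∞ (so any pair whose distance is preserved by f₁ or f₂ has its distance preserved by f). -/
/-- The inductive gluing step in the embedding of trees into `ℓ∞`: if `X = X₁ ∪ X₂`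
with `X₁ ∩ X₂ = {s}` and every `u ∈ X₁`, `v ∈ X₂` satisfy `d(u,v) = d(u,s) + d(s,v)`,
then gluing two non-expanding embeddings `f₁ : X₁ → ℝ^m`, `f₂ : X₂ → ℝ^m` with
`f₁ s = f₂ s = 0` and appending the coordinate `±d(s,·)` yields a non-expanding map
`f : X → ℝ^{m+1}` which is isometric on pairs `X₁ × X₂` and dominates both `f₁` and
`f₂` on the norms of differences. -/
theorem glue_embeddings_along_separator
    (X : Type*) [MetricSpace X] (X₁ X₂ : Set X) (s : X)
    (hunion : X₁ ∪ X₂ = Set.univ) (hinter : X₁ ∩ X₂ = {s})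
    (hadd : ∀ u ∈ X₁, ∀ v ∈ X₂, dist u v = dist u s + dist s v)
    (m : ℕ) (f₁ : X₁ → (Fin m → ℝ)) (f₂ : X₂ → (Fin m → ℝ))
    (hf₁ : ∀ u w : X₁, ‖f₁ u - f₁ w‖ ≤ dist (u : X) (w : X))
    (hf₂ : ∀ u w : X₂, ‖f₂ u - f₂ w‖ ≤ dist (u : X) (w : X))
    (hs₁ : ∀ h : s ∈ X₁, f₁ ⟨s, h⟩ = 0)
    (hs₂ : ∀ h : s ∈ X₂, f₂ ⟨s, h⟩ = 0)
    (f : X → (Fin (m + 1) → ℝ))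
    (hfX₁ : ∀ (u : X) (hu : u ∈ X₁),
      (∀ t : Fin m, f u t.castSucc = f₁ ⟨u, hu⟩ t) ∧ f u (Fin.last m) = dist s u)
    (hfX₂ : ∀ (u : X) (hu : u ∈ X₂),
      (∀ t : Fin m, f u t.castSucc = f₂ ⟨u, hu⟩ t) ∧ f u (Fin.last m) = -dist s u) :
    (∀ u w : X, ‖f u - f w‖ ≤ dist u w) ∧
    (∀ u ∈ X₁, ∀ v ∈ X₂, ‖f u - f v‖ = dist u v) ∧
    (∀ u w : X₁, ‖f (u : X) - f (w : X)‖ ≥ ‖f₁ u - f₁ w‖) ∧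
    (∀ u w : X₂, ‖f (u : X) - f (w : X)‖ ≥ ‖f₂ u - f₂ w‖) := by
  have hsmem : s ∈ X₁ ∩ X₂ := by rw [hinter]; rfl
  obtain ⟨hs1, hs2⟩ := hsmem
  -- dominance lemmas
  have dom₁ : ∀ u w : X₁, ‖f₁ u - f₁ w‖ ≤ ‖f (u : X) - f (w : X)‖ := by
    intro u w
    refine (pi_norm_le_iff_of_nonneg (norm_nonneg _)).2 fun t => ?_
    have h1 := (hfX₁ u u.2).1 t
    have h2 := (hfX₁ w w.2).1 t
    have he : (f₁ u - f₁ w) t = (f (u : X) - f (w : X)) (t.castSucc) := by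
      simp [h1, h2]
    rw [he]
    exact norm_le_pi_norm _ _
  have dom₂ : ∀ u w : X₂, ‖f₂ u - f₂ w‖ ≤ ‖f (u : X) - f (w : X)‖ := by
    intro u w
    refine (pi_norm_le_iff_of_nonneg (norm_nonneg _)).2 fun t => ?_
    have h1 := (hfX₂ u u.2).1 t
    have h2 := (hfX₂ w w.2).1 t
    have he : (f₂ u - f₂ w) t = (f (u : X) - f (w : X)) (t.castSucc) := by
      simp [h1, h2]
    rw [he]
    exact norm_le_pi_norm _ _
  -- non-expanding within X₁
  have ne₁ : ∀ u w : X₁, ‖f (u : X) - f (w : X)‖ ≤ dist (u : X) (w : X) := by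
    intro u w
    refine (pi_norm_le_iff_of_nonneg dist_nonneg).2 fun i => ?_
    induction i using Fin.lastCases with
    | last =>
      have h1 := (hfX₁ u u.2).2
      have h2 := (hfX₁ w w.2).2
      simp only [Pi.sub_apply, h1, h2, Real.norm_eq_abs]
      rw [dist_comm s (u : X), dist_comm s (w : X)]
      exact abs_dist_sub_le _ _ _
    | cast t =>
      have h1 := (hfX₁ u u.2).1 t
      have h2 := (hfX₁ w w.2).1 t
      have he : (f (u : X) - f (w : X)) (t.castSucc) = (f₁ u - f₁ w) t := by
        simp [h1, h2]
      rw [he]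
      exact le_trans (norm_le_pi_norm _ _) (hf₁ u w)
  have ne₂ : ∀ u w : X₂, ‖f (u : X) - f (w : X)‖ ≤ dist (u : X) (w : X) := by
    intro u w
    refine (pi_norm_le_iff_of_nonneg dist_nonneg).2 fun i => ?_
    induction i using Fin.lastCases with
    | last =>
      have h1 := (hfX₂ u u.2).2
      have h2 := (hfX₂ w w.2).2
      simp only [Pi.sub_apply, h1, h2, Real.norm_eq_abs]
      rw [dist_comm s (u : X), dist_comm s (w : X)]
      have := abs_dist_sub_le (u : X) (w : X) s
      rw [abs_sub_comm] at this
      calc |-dist (u : X) s - -dist (w : X) s| = |dist (w : X) s - dist (u : X) s| := by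
            ring_nf
        _ ≤ dist (u : X) (w : X) := this
    | cast t =>
      have h1 := (hfX₂ u u.2).1 t
      have h2 := (hfX₂ w w.2).1 t
      have he : (f (u : X) - f (w : X)) (t.castSucc) = (f₂ u - f₂ w) t := by
        simp [h1, h2]
      rw [he]
      exact le_trans (norm_le_pi_norm _ _) (hf₂ u w)
  -- mixed: exact isometry on X₁ × X₂
  have mix : ∀ u ∈ X₁, ∀ v ∈ X₂, ‖f u - f v‖ = dist u v := by
    intro u hu v hv
    have hlast : (f u - f v) (Fin.last m) = dist u v := by
      have h1 := (hfX₁ u hu).2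
      have h2 := (hfX₂ v hv).2
      simp only [Pi.sub_apply, h1, h2]
      rw [hadd u hu v hv, dist_comm s u]
      ring
    have hle : ‖f u - f v‖ ≤ dist u v := by
      refine (pi_norm_le_iff_of_nonneg dist_nonneg).2 fun i => ?_
      induction i using Fin.lastCases with
      | last =>
        rw [hlast, Real.norm_eq_abs, abs_of_nonneg dist_nonneg]
      | cast t =>
        have h1 := (hfX₁ u hu).1 t
        have h2 := (hfX₂ v hv).1 t
        have b1 : |f₁ ⟨u, hu⟩ t| ≤ dist u s := by
          have h := le_trans (norm_le_pi_norm (f₁ ⟨u, hu⟩ - f₁ ⟨s, hs1⟩) t)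
            (hf₁ ⟨u, hu⟩ ⟨s, hs1⟩)
          rw [hs₁ hs1] at h
          simpa using h
        have b2 : |f₂ ⟨v, hv⟩ t| ≤ dist s v := by
          have h := le_trans (norm_le_pi_norm (f₂ ⟨v, hv⟩ - f₂ ⟨s, hs2⟩) t)
            (hf₂ ⟨v, hv⟩ ⟨s, hs2⟩)
          rw [hs₂ hs2] at h
          rw [dist_comm s v]
          simpa using h
        have : (f u - f v) (t.castSucc) = f₁ ⟨u, hu⟩ t - f₂ ⟨v, hv⟩ t := by
          simp [h1, h2]
        rw [this, Real.norm_eq_abs, hadd u hu v hv]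
        calc |f₁ ⟨u, hu⟩ t - f₂ ⟨v, hv⟩ t| ≤ |f₁ ⟨u, hu⟩ t| + |f₂ ⟨v, hv⟩ t| :=
              abs_sub _ _
          _ ≤ dist u s + dist s v := add_le_add b1 b2
    have hge : dist u v ≤ ‖f u - f v‖ := by
      have := norm_le_pi_norm (f u - f v) (Fin.last m)
      rw [hlast, Real.norm_eq_abs, abs_of_nonneg dist_nonneg] at this
      exact this
    exact le_antisymm hle hge
  refine ⟨?_, mix, fun u w => dom₁ u w, fun u w => dom₂ u w⟩
  intro u w
  have hu : u ∈ X₁ ∪ X₂ := by rw [hunion]; trivial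
  have hw : w ∈ X₁ ∪ X₂ := by rw [hunion]; trivial
  rcases hu with hu | hu <;> rcases hw with hw | hw
  · exact ne₁ ⟨u, hu⟩ ⟨w, hw⟩
  · exact le_of_eq (mix u hu w hw)
  · rw [norm_sub_rev, dist_comm]
    exact le_of_eq (mix w hw u hu)
  · exact ne₂ ⟨u, hu⟩ ⟨w, hw⟩
end
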